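/- (Leverage scores after splitting) Let G be a weighted graph and e an edge. (a) If lev_G(e) ≤ 1/2 and e is replaced by a path of two edges e1, e2 each of resistance r_e/2, then lev(e_i) = (1/2) lev_G(e) + 1/2 ∈ [1/2, 3/4] for i = 1,2 in the new graph. (b) If lev_G(e) ≥ 1/2 and e is replaced by two parallel edges e1, e2 each of resistance 2 r_e, then lev(e_i) = (1/2) lev_G(e) ∈ [1/4, 1/2] for i = 1,2 in the new graph. In particular, in both cases each copy has leverage score in [1/4, 3/4]. -/

import Mathlib

open Matrix

/-- The signed indicator vector `χ_x - χ_y`. -/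
def incv {V : Type*} [DecidableEq V] (x y : V) : V → ℝ := fun v =>
  (if v = x then 1 else 0) - (if v = y then 1 else 0)

/-- Weighted Laplacian of the multigraph whose edge `e` has endpoints `a e`, `b e`
and conductance `c e`. -/
noncomputable def lapM {V E : Type*} [DecidableEq V] [Fintype E]
    (a b : E → V) (c : E → ℝ) : Matrix V V ℝ :=
  ∑ e, c e • Matrix.vecMulVec (incv (a e) (b e)) (incv (a e) (b e))

/-- `M` is the Moore–Penrose pseudoinverse of `L`. -/
def IsMPInv {V : Type*} [Fintype V] (L M : Matrix V V ℝ) : Prop :=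
  L * M * L = L ∧ M * L * M = M ∧ (L * M)ᵀ = L * M ∧ (M * L)ᵀ = M * L

/-- Connectivity of a weighted graph, encoded as: the kernel of its Laplacian
consists exactly of the constant vectors. -/
def LapConnected {V : Type*} [Fintype V] (L : Matrix V V ℝ) : Prop :=
  ∀ x : V → ℝ, L.mulVec x = 0 → ∃ t : ℝ, ∀ v, x v = t

/-- Leverage score of edge `e` (resistance version): `b_eᵀ L⁺ b_e / r_e`. -/
noncomputable def levOf {V E : Type*} [Fintype V] [DecidableEq V]
    (a b : E → V) (r : E → ℝ) (Lp : Matrix V V ℝ) (e : E) : ℝ :=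
  (incv (a e) (b e) ⬝ᵥ Lp.mulVec (incv (a e) (b e))) / r e

/-- Endpoint map of the graph obtained by splitting edge `e` in series:
first copy goes from `a e` to a new midpoint. -/
def seriesA {V E : Type*} (a : E → V) : E ⊕ Unit → V ⊕ Unit
  | .inl e' => .inl (a e')
  | .inr _ => .inr ()

def seriesB {V E : Type*} [DecidableEq E] (b : E → V) (e : E) : E ⊕ Unit → V ⊕ Unit
  | .inl e' => if e' = e then .inr () else .inl (b e')
  | .inr _ => .inl (b e)

/-- Resistances after splitting `e` in series: both copies get `r e / 2`. -/
noncomputable def seriesR {E : Type*} [DecidableEq E] (r : E → ℝ) (e : E) : E ⊕ Unit → ℝ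
  | .inl e' => if e' = e then r e / 2 else r e'
  | .inr _ => r e / 2

/-- Endpoint maps after splitting `e` in parallel. -/
def parA {V E : Type*} (a : E → V) (e : E) : E ⊕ Unit → V
  | .inl e' => a e'
  | .inr _ => a e

def parB {V E : Type*} (b : E → V) (e : E) : E ⊕ Unit → V
  | .inl e' => b e'
  | .inr _ => b e

/-- Resistances after splitting `e` in parallel: both copies get `2 r e`. -/
noncomputable def parR {E : Type*} [DecidableEq E] (r : E → ℝ) (e : E) : E ⊕ Unit → ℝ
  | .inl e' => if e' = e then 2 * r e else r e'
  | .inr _ => 2 * r e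

/-!
Let `ψ` be a potential for a unit current from `a e` to `b e`, i.e. `L ψ = incv (a e) (b e)`;
it exists by connectivity. For any `S` with `L S L = L` the leverage score of `e` is the
potential drop `(ψ (a e) - ψ (b e)) / r e`, and the energy identity
`ψ (a e) - ψ (b e) = ∑ c (Δψ)²` puts it in `[0, 1]`.
Splitting `e` in parallel leaves the Laplacian unchanged and doubles the resistance of each
copy, which halves the leverage score. Splitting in series, half of `ψ` on the old vertices,
with a suitable potential at the midpoint, drives a unit current through either half of `e`;
its drop across that half gives `lev / 2 + 1 / 2`.
-/

namespace Matrix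

variable {n R : Type*} [Fintype n]

theorem dotProduct_mulVec_eq_of_mulVec_eq [CommRing R] {L S : Matrix n n R} (hL : L.IsSymm)
    (hLSL : L * S * L = L) {φ w : n → R} (hφ : L *ᵥ φ = w) : w ⬝ᵥ S *ᵥ w = φ ⬝ᵥ w := by
  calc w ⬝ᵥ S *ᵥ w = φ ᵥ* Lᵀ ⬝ᵥ (S * L) *ᵥ φ := by
        rw [vecMul_transpose, hφ, ← mulVec_mulVec, hφ]
    _ = φ ⬝ᵥ w := by
        rw [hL.eq, ← dotProduct_mulVec, mulVec_mulVec, ← Matrix.mul_assoc, hLSL, hφ]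

theorem mul_mul_eq_self_of_isSymm [CommRing R] {L M : Matrix n n R} (hL : L.IsSymm)
    (hLML : L * M * L = L) (hLM : (L * M)ᵀ = L * M) : L * (L * M) = L := by
  calc L * (L * M) = (L * M * L)ᵀ := by rw [transpose_mul, hL.eq, hLM]
    _ = L := by rw [hLML, hL.eq]

theorem mulVec_mulVec_eq_of_sum_eq_zero {L M : Matrix n n ℝ} (hL : L.IsSymm)
    (hL1 : L *ᵥ (fun _ => 1) = 0) (hconn : LapConnected L) (hLML : L * M * L = L)
    (hLM : (L * M)ᵀ = L * M) {w : n → ℝ} (hw : ∑ v, w v = 0) : L *ᵥ (M *ᵥ w) = w := by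
  set x := w - L *ᵥ (M *ᵥ w)
  have hLx : L *ᵥ x = 0 := by
    rw [mulVec_sub, mulVec_mulVec, mulVec_mulVec, Matrix.mul_assoc,
      mul_mul_eq_self_of_isSymm hL hLML hLM, sub_self]
  have hx : ∑ v, x v = 0 := by
    have h1L : (fun _ => (1 : ℝ)) ᵥ* L = 0 := by rw [← mulVec_transpose, hL.eq, hL1]
    have := dotProduct_mulVec (fun _ => (1 : ℝ)) L (M *ᵥ w)
    rw [h1L, zero_dotProduct] at this
    simpa [x, Finset.sum_sub_distrib, hw, dotProduct] using this
  obtain ⟨t, ht⟩ := hconn x hLx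
  funext v
  have ht0 : t = 0 := by
    have hcard : (Fintype.card n : ℝ) * t = 0 := by simpa [ht] using hx
    exact (mul_eq_zero.1 hcard).resolve_left (Nat.cast_ne_zero.2 (Fintype.card_pos_iff.2 ⟨v⟩).ne')
  exact (sub_eq_zero.1 (ht0 ▸ ht v)).symm

end Matrix

section Laplacian

variable {V E : Type*} [DecidableEq V]

theorem incv_inl_inl (x y : V) :
    incv (Sum.inl x : V ⊕ Unit) (Sum.inl y) = Sum.elim (incv x y) 0 := by
  funext v; cases v <;> simp [incv]

theorem incv_dotProduct [Fintype V] (x y : V) (z : V → ℝ) : incv x y ⬝ᵥ z = z x - z y := by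
  simp [incv, dotProduct, sub_mul, Finset.sum_sub_distrib]

theorem dotProduct_incv [Fintype V] (x y : V) (z : V → ℝ) : z ⬝ᵥ incv x y = z x - z y := by
  rw [dotProduct_comm, incv_dotProduct]

theorem sum_incv [Fintype V] (x y : V) : ∑ v, incv x y v = 0 := by
  simp [incv, Finset.sum_sub_distrib]

variable [Fintype E]

theorem lapM_mulVec [Fintype V] (a b : E → V) (c : E → ℝ) (x : V → ℝ) :
    lapM a b c *ᵥ x = ∑ e, (c e * (x (a e) - x (b e))) • incv (a e) (b e) := by
  simp only [lapM, sum_mulVec, smul_mulVec, vecMulVec_mulVec, incv_dotProduct,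
    op_smul_eq_smul, smul_smul]

theorem lapM_isSymm (a b : E → V) (c : E → ℝ) : (lapM a b c).IsSymm := by
  simp [IsSymm, lapM, transpose_sum, transpose_smul, transpose_vecMulVec]

theorem lapM_mulVec_const [Fintype V] (a b : E → V) (c : E → ℝ) :
    lapM a b c *ᵥ (fun _ => 1) = 0 := by
  simp [lapM_mulVec]

theorem dotProduct_lapM_mulVec [Fintype V] (a b : E → V) (c : E → ℝ) (x : V → ℝ) :
    x ⬝ᵥ lapM a b c *ᵥ x = ∑ e, c e * (x (a e) - x (b e)) ^ 2 := by
  simp only [lapM_mulVec, dotProduct_sum, dotProduct_smul, dotProduct_incv, smul_eq_mul, sq,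
    mul_assoc]

end Laplacian

section Leverage

variable {V E : Type*} [Fintype V] [DecidableEq V] [Fintype E]

theorem levOf_eq_of_mulVec_eq {a b : E → V} {r : E → ℝ} {S : Matrix V V ℝ}
    (hS : lapM a b (fun e => (r e)⁻¹) * S * lapM a b (fun e => (r e)⁻¹)
      = lapM a b (fun e => (r e)⁻¹))
    {e : E} {φ : V → ℝ} (hφ : lapM a b (fun e => (r e)⁻¹) *ᵥ φ = incv (a e) (b e)) :
    levOf a b r S e = (φ (a e) - φ (b e)) / r e := by
  rw [levOf, dotProduct_mulVec_eq_of_mulVec_eq (lapM_isSymm _ _ _) hS hφ, dotProduct_incv]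

theorem sub_eq_sum_of_lapM_mulVec_eq {a b : E → V} {c : E → ℝ} {e : E} {φ : V → ℝ}
    (hφ : lapM a b c *ᵥ φ = incv (a e) (b e)) :
    φ (a e) - φ (b e) = ∑ e', c e' * (φ (a e') - φ (b e')) ^ 2 := by
  rw [← dotProduct_incv, ← hφ, dotProduct_lapM_mulVec]

theorem levOf_mem_Icc {a b : E → V} {r : E → ℝ} (hr : ∀ e, 0 < r e) {S : Matrix V V ℝ}
    (hS : lapM a b (fun e => (r e)⁻¹) * S * lapM a b (fun e => (r e)⁻¹)
      = lapM a b (fun e => (r e)⁻¹))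
    {e : E} {φ : V → ℝ} (hφ : lapM a b (fun e => (r e)⁻¹) *ᵥ φ = incv (a e) (b e)) :
    levOf a b r S e ∈ Set.Icc 0 1 := by
  set R := φ (a e) - φ (b e)
  have hE : R = ∑ e', (r e')⁻¹ * (φ (a e') - φ (b e')) ^ 2 := sub_eq_sum_of_lapM_mulVec_eq hφ
  have hterm : ∀ e', 0 ≤ (r e')⁻¹ * (φ (a e') - φ (b e')) ^ 2 :=
    fun e' => mul_nonneg (inv_nonneg.2 (hr e').le) (sq_nonneg _)
  have hR : 0 ≤ R := hE ▸ Finset.sum_nonneg fun e' _ => hterm e'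
  have hRsq : R ^ 2 ≤ r e * R := by
    rw [← inv_mul_le_iff₀ (hr e)]
    conv_rhs => rw [hE]
    exact Finset.single_le_sum (f := fun e' => (r e')⁻¹ * (φ (a e') - φ (b e')) ^ 2)
      (fun e' _ => hterm e') (Finset.mem_univ e)
  have hRle : R ≤ r e := by nlinarith [hr e]
  rw [levOf_eq_of_mulVec_eq hS hφ]
  exact ⟨div_nonneg hR (hr e).le, (div_le_one (hr e)).2 hRle⟩

end Leverage

section Splitting

variable {V E : Type*} [DecidableEq V] [Fintype E] [DecidableEq E]

theorem lapM_parA_parB (a b : E → V) (r : E → ℝ) (e : E) :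
    lapM (parA a e) (parB b e) (fun x => (parR r e x)⁻¹) = lapM a b fun e' => (r e')⁻¹ := by
  rw [lapM, lapM, Fintype.sum_sum_type, Fintype.sum_eq_add_sum_compl e,
    Fintype.sum_eq_add_sum_compl e (fun e' => (r e')⁻¹ • _)]
  have hold : ∀ e' ∈ ({e}ᶜ : Finset E), (parR r e (.inl e'))⁻¹ •
      vecMulVec (incv (parA a e (.inl e')) (parB b e (.inl e')))
        (incv (parA a e (.inl e')) (parB b e (.inl e')))
      = (r e')⁻¹ • vecMulVec (incv (a e') (b e')) (incv (a e') (b e')) := by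
    intro e' he'
    have : e' ≠ e := by simpa using he'
    simp [parA, parB, parR, this]
  rw [Finset.sum_congr rfl hold, add_right_comm, add_left_inj]
  simp only [parA, parB, parR, if_true, Finset.univ_unique, Finset.sum_singleton, ← add_smul]
  congr 1
  ring

theorem levOf_parA_parB [Fintype V] {a b : E → V} {r : E → ℝ} {e : E} {S : Matrix V V ℝ}
    (hS : lapM (parA a e) (parB b e) (fun x => (parR r e x)⁻¹) * S
      * lapM (parA a e) (parB b e) (fun x => (parR r e x)⁻¹)
      = lapM (parA a e) (parB b e) (fun x => (parR r e x)⁻¹))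
    {ψ : V → ℝ} (hψ : lapM a b (fun e' => (r e')⁻¹) *ᵥ ψ = incv (a e) (b e))
    {x : E ⊕ Unit} (hx : x = .inl e ∨ x = .inr ()) :
    levOf (parA a e) (parB b e) (parR r e) S x = (ψ (a e) - ψ (b e)) / r e / 2 := by
  obtain ⟨hxa, hxb, hxr⟩ : parA a e x = a e ∧ parB b e x = b e ∧ parR r e x = 2 * r e := by
    rcases hx with rfl | rfl <;> simp [parA, parB, parR]
  rw [← lapM_parA_parB a b r e, ← hxa, ← hxb] at hψ
  rw [levOf_eq_of_mulVec_eq hS hψ, hxa, hxb, hxr, div_div, mul_comm 2]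

end Splitting

section Series

variable {V E : Type*} [Fintype V] [DecidableEq V] [Fintype E] [DecidableEq E]

/-- The midpoint potential makes the two halves of `e` carry currents `(1 + s) / 2` and
`(1 - s) / 2`; `s = 1` and `s = -1` give a unit current through the first and second half. -/
noncomputable def seriesPotential (a b : E → V) (r : E → ℝ) (e : E) (ψ : V → ℝ) (s : ℝ) :
    V ⊕ Unit → ℝ :=
  Sum.elim (fun v => ψ v / 2) fun _ => (ψ (a e) + ψ (b e)) / 4 - s * r e / 4

theorem lapM_series_mulVec_seriesPotential {a b : E → V} {r : E → ℝ} {e : E} (hre : r e ≠ 0)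
    {ψ : V → ℝ} (hψ : lapM a b (fun e' => (r e')⁻¹) *ᵥ ψ = incv (a e) (b e)) (s : ℝ) :
    lapM (seriesA a) (seriesB b e) (fun x => (seriesR r e x)⁻¹) *ᵥ seriesPotential a b r e ψ s
      = ((1 + s) / 2) • incv (.inl (a e)) (.inr ())
        + ((1 - s) / 2) • incv (.inr ()) (.inl (b e)) := by
  rw [lapM_mulVec, Fintype.sum_eq_add_sum_compl e] at hψ
  have hold : ∀ e' ∈ ({e}ᶜ : Finset E),
      ((seriesR r e (.inl e'))⁻¹ * (seriesPotential a b r e ψ s (seriesA a (.inl e'))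
        - seriesPotential a b r e ψ s (seriesB b e (.inl e'))))
        • incv (seriesA a (.inl e')) (seriesB b e (.inl e'))
      = Sum.elim ((1 / 2 : ℝ) • (((r e')⁻¹ * (ψ (a e') - ψ (b e'))) • incv (a e') (b e'))) 0 := by
    intro e' he'
    have : e' ≠ e := by simpa using he'
    simp only [seriesA, seriesB, seriesR, seriesPotential, if_neg this, Sum.elim_inl, incv_inl_inl]
    funext v
    cases v <;> simp only [Pi.smul_apply, Sum.elim_inl, Sum.elim_inr, Pi.zero_apply, smul_eq_mul,
      mul_zero]
    ring
  have hsum : ∀ f : E → V → ℝ, ∑ e' ∈ ({e}ᶜ : Finset E), Sum.elim (f e') (0 : Unit → ℝ)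
      = Sum.elim (∑ e' ∈ ({e}ᶜ : Finset E), f e') 0 := by
    intro f; funext v; cases v <;> simp [Finset.sum_apply]
  rw [lapM_mulVec, Fintype.sum_sum_type, Fintype.sum_eq_add_sum_compl e,
    Finset.sum_congr rfl hold, hsum, ← Finset.smul_sum, eq_sub_of_add_eq' hψ]
  funext v
  rcases v with u | _ <;>
    simp only [seriesA, seriesB, seriesR, seriesPotential, if_true, Sum.elim_inl, Sum.elim_inr,
      Finset.univ_unique, Finset.sum_singleton, Pi.add_apply, Pi.sub_apply, Pi.smul_apply,
      Pi.zero_apply, smul_eq_mul, incv, Sum.inl.injEq, reduceCtorEq, if_false] <;>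
    (try split_ifs) <;> field_simp <;> ring

theorem levOf_seriesA_seriesB {a b : E → V} {r : E → ℝ} {e : E} (hre : r e ≠ 0)
    {S : Matrix (V ⊕ Unit) (V ⊕ Unit) ℝ}
    (hS : lapM (seriesA a) (seriesB b e) (fun x => (seriesR r e x)⁻¹) * S
      * lapM (seriesA a) (seriesB b e) (fun x => (seriesR r e x)⁻¹)
      = lapM (seriesA a) (seriesB b e) (fun x => (seriesR r e x)⁻¹))
    {ψ : V → ℝ} (hψ : lapM a b (fun e' => (r e')⁻¹) *ᵥ ψ = incv (a e) (b e))
    {x : E ⊕ Unit} (hx : x = .inl e ∨ x = .inr ()) :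
    levOf (seriesA a) (seriesB b e) (seriesR r e) S x
      = (ψ (a e) - ψ (b e)) / r e / 2 + 1 / 2 := by
  rcases hx with rfl | rfl
  · have hB : seriesB b e (.inl e) = .inr () := if_pos rfl
    have hφ := lapM_series_mulVec_seriesPotential hre hψ 1
    norm_num at hφ
    rw [← hB] at hφ
    rw [levOf_eq_of_mulVec_eq hS hφ, hB]
    simp only [seriesA, seriesR, seriesPotential, if_true, Sum.elim_inl, Sum.elim_inr]
    field_simp
    ring
  · have hφ := lapM_series_mulVec_seriesPotential hre hψ (-1)
    norm_num at hφ
    rw [levOf_eq_of_mulVec_eq hS hφ]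
    simp only [seriesA, seriesB, seriesR, seriesPotential, Sum.elim_inl, Sum.elim_inr]
    field_simp
    ring

end Series

/-- **Leverage scores after splitting.**  Splitting an edge of leverage score
`≤ 1/2` in series gives two copies of leverage score `lev/2 + 1/2 ∈ [1/2,3/4]`;
splitting an edge of leverage score `≥ 1/2` in parallel gives two copies of
leverage score `lev/2 ∈ [1/4,1/2]`. -/
theorem leverage_after_splitting
    {V E : Type*} [Fintype V] [DecidableEq V] [Fintype E] [DecidableEq E]
    (a b : E → V) (r : E → ℝ) (hr : ∀ e', 0 < r e') (e : E)
    (hconn : LapConnected (lapM a b fun e' => (r e')⁻¹))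
    (Lp : Matrix V V ℝ) (hLp : IsMPInv (lapM a b fun e' => (r e')⁻¹) Lp)
    (LpS : Matrix (V ⊕ Unit) (V ⊕ Unit) ℝ)
    (hLpS : IsMPInv (lapM (seriesA a) (seriesB b e) fun x => (seriesR r e x)⁻¹) LpS)
    (LpP : Matrix V V ℝ)
    (hLpP : IsMPInv (lapM (parA a e) (parB b e) fun x => (parR r e x)⁻¹) LpP) :
    (levOf a b r Lp e ≤ 1/2 →
      levOf (seriesA a) (seriesB b e) (seriesR r e) LpS (Sum.inl e)
          = levOf a b r Lp e / 2 + 1/2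
        ∧ levOf (seriesA a) (seriesB b e) (seriesR r e) LpS (Sum.inr ())
          = levOf a b r Lp e / 2 + 1/2
        ∧ levOf a b r Lp e / 2 + 1/2 ∈ Set.Icc (1/2 : ℝ) (3/4))
    ∧ (1/2 ≤ levOf a b r Lp e →
      levOf (parA a e) (parB b e) (parR r e) LpP (Sum.inl e)
          = levOf a b r Lp e / 2
        ∧ levOf (parA a e) (parB b e) (parR r e) LpP (Sum.inr ())
          = levOf a b r Lp e / 2
        ∧ levOf a b r Lp e / 2 ∈ Set.Icc (1/4 : ℝ) (1/2)) := by
  have hψ : (lapM a b fun e' => (r e')⁻¹) *ᵥ (Lp *ᵥ incv (a e) (b e)) = incv (a e) (b e) :=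
    mulVec_mulVec_eq_of_sum_eq_zero (lapM_isSymm a b _) (lapM_mulVec_const a b _) hconn
      hLp.1 hLp.2.2.1 (sum_incv (a e) (b e))
  have hlev := levOf_eq_of_mulVec_eq hLp.1 hψ
  obtain ⟨hlev0, hlev1⟩ := levOf_mem_Icc hr hLp.1 hψ
  have hre := (hr e).ne'
  refine ⟨fun hhalf => ⟨?_, ?_, by constructor <;> linarith⟩,
    fun hhalf => ⟨?_, ?_, by constructor <;> linarith⟩⟩
  · rw [hlev]; exact levOf_seriesA_seriesB hre hLpS.1 hψ (.inl rfl)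
  · rw [hlev]; exact levOf_seriesA_seriesB hre hLpS.1 hψ (.inr rfl)
  · rw [hlev]; exact levOf_parA_parB hLpP.1 hψ (.inl rfl)
  · rw [hlev]; exact levOf_parA_parB hLpP.1 hψ (.inr rfl)
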